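/- Let p be a prime and G ⊆ GL_{p^k}(F) a finite irreducible monomial matrix group of exponent p, in which every element is of the form DP, where D is diagonal with p-th roots of unity on the diagonal and P is a permutation matrix of order dividing p. Then G has submultiplicative spectrum: σ(AB) ⊆ σ(A)·σ(B) for all A, B ∈ G. -/

import Mathlib

/-! Since `g ^ p = 1`, the spectrum of every `g ∈ G` lies in the group `Γ` of `p`-th roots of
unity. If `g = D P_σ` with `σ ≠ 1`, it is all of `Γ`: for `ω ∈ Γ` the sum `∑ ω ^ (p - 1 - m) g ^ m`
is annihilated by `g - ω`, and it is nonzero because for a point `x` moved by `σ` its `(x, σ x)`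
entry only receives a contribution from `m = 1`. Hence if `A` or `B` is not diagonal, every
`μ ∈ σ(AB) ⊆ Γ` splits as `(μ β⁻¹) β` with `β` any eigenvalue of the other factor; if both are
diagonal, the eigenvalues of `AB` are the products of corresponding diagonal entries. -/

open Pointwise Finset Matrix

section Spectrum

variable {F A : Type*} [Field F] [Ring A] [Algebra F A]

theorem spectrum.pow_eq_one_of_pow_eq_one {a : A} {n : ℕ} (ha : a ^ n = 1) {μ : F}
    (hμ : μ ∈ spectrum F a) : μ ^ n = 1 := by
  cases subsingleton_or_nontrivial A
  · simp [spectrum.of_subsingleton] at hμ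
  · simpa [ha, spectrum.one_eq] using spectrum.pow_mem_pow a n hμ

theorem spectrum.mem_of_geom_sum_ne_zero {a : A} {ω : F} {n : ℕ}
    (ha : a ^ n = algebraMap F A (ω ^ n))
    (hsum : ∑ i ∈ range n, ω ^ (n - 1 - i) • a ^ i ≠ 0) : ω ∈ spectrum F a := by
  rw [spectrum.mem_iff]
  intro hunit
  apply hsum
  have hgeom := (Algebra.commute_algebraMap_right ω a).geom_sum₂_mul n
  rw [ha, ← map_pow, sub_self] at hgeom
  have hsmul : ∀ i ∈ range n, a ^ i * algebraMap F A ω ^ (n - 1 - i) = ω ^ (n - 1 - i) • a ^ i :=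
    fun i _ => by rw [← map_pow, ← Algebra.commutes, ← Algebra.smul_def]
  rw [sum_congr rfl hsmul] at hgeom
  exact (IsUnit.mul_left_eq_zero (by simpa using hunit.neg)).mp hgeom

end Spectrum

theorem Equiv.Perm.eq_one_of_pow_apply_eq_apply {α : Type*} {p : ℕ} (hp : p.Prime)
    {σ : Equiv.Perm α} (hσ : σ ^ p = 1) {x : α} (hx : σ x ≠ x) {m : ℕ} (hm : m < p)
    (h : (σ ^ m) x = σ x) : m = 1 := by
  have hperiod : MulAction.period σ x = p := by
    have hdvd : MulAction.period σ x ∣ p := MulAction.pow_smul_eq_iff_period_dvd.mp (by simp [hσ])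
    refine ((Nat.dvd_prime hp).mp hdvd).resolve_left fun h1 => hx ?_
    exact MulAction.period_eq_one_iff.mp h1
  obtain _ | j := m
  · exact absurd h.symm hx
  · have hj : (σ ^ j) x = x := σ.injective (by rwa [← Equiv.Perm.mul_apply, ← pow_succ'])
    have : p ∣ j := hperiod ▸ MulAction.pow_smul_eq_iff_period_dvd.mp hj
    have := Nat.eq_zero_of_dvd_of_lt this (by omega)
    omega

section Monomial

variable {n : Type*} [Fintype n] [DecidableEq n]

theorem Matrix.diagonal_mul_permMatrix_apply {R : Type*} [Semiring R] (d : n → R)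
    (σ : Equiv.Perm n) (i j : n) :
    (diagonal d * σ.permMatrix R) i j = if σ i = j then d i else 0 := by
  by_cases h : σ i = j <;> simp [h, PEquiv.toMatrix_apply]

theorem Matrix.eq_of_diagonal_mul_permMatrix_pow_apply_ne_zero {R : Type*} [Semiring R]
    {d : n → R} {σ : Equiv.Perm n} {m : ℕ} {i j : n}
    (h : ((diagonal d * σ.permMatrix R) ^ m) i j ≠ 0) : (σ ^ m) i = j := by
  induction m generalizing j with
  | zero =>
    rw [pow_zero] at h ⊢
    exact not_imp_comm.mp one_apply_ne h
  | succ m ih =>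
    rw [pow_succ, mul_apply] at h
    obtain ⟨l, -, hl⟩ := exists_ne_zero_of_sum_ne_zero h
    have hσl : σ l = j := by
      by_contra hlj
      exact hl (by rw [diagonal_mul_permMatrix_apply, if_neg hlj, mul_zero])
    rw [pow_succ', Equiv.Perm.mul_apply, ih (left_ne_zero_of_mul hl), hσl]

theorem Matrix.mem_spectrum_diagonal_mul_permMatrix {F : Type*} [Field F] {p : ℕ}
    (hp : p.Prime) {d : n → F} {σ : Equiv.Perm n} (hd : ∀ i, d i ≠ 0) (hσ : σ ≠ 1)
    (hσp : σ ^ p = 1) (hM : (diagonal d * σ.permMatrix F) ^ p = 1) {ω : F} (hω : ω ^ p = 1) :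
    ω ∈ spectrum F (diagonal d * σ.permMatrix F) := by
  obtain ⟨x, hx⟩ : ∃ x, σ x ≠ x := by
    by_contra! h
    exact hσ (Equiv.ext h)
  refine spectrum.mem_of_geom_sum_ne_zero (by rw [hM, hω, map_one]) fun hsum => ?_
  have hentry := congrFun (congrFun hsum x) (σ x)
  rw [sum_apply, sum_eq_single 1] at hentry
  · have hω0 : ω ≠ 0 := ne_zero_pow hp.ne_zero (by rw [hω]; exact one_ne_zero)
    simp [hω0, hd] at hentry
  · intro m hm hm1
    rw [smul_apply, smul_eq_zero]
    by_contra! hne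
    exact hm1 (σ.eq_one_of_pow_apply_eq_apply hp hσp hx (mem_range.mp hm)
      (eq_of_diagonal_mul_permMatrix_pow_apply_ne_zero hne.2))
  · exact fun h1 => absurd (mem_range.mpr hp.one_lt) h1

end Monomial

theorem Set.setOf_pow_eq_one_subset_mul {F : Type*} [Field F] {p : ℕ} (hp : p ≠ 0)
    {S T : Set F} (hS : {x | x ^ p = 1} ⊆ S) (hT : T ⊆ {x | x ^ p = 1}) (hTne : T.Nonempty) :
    {x | x ^ p = 1} ⊆ S * T := by
  intro μ hμ
  obtain ⟨β, hβ⟩ := hTne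
  have hβp : β ^ p = 1 := hT hβ
  have hβ0 : β ≠ 0 := ne_zero_pow hp (by rw [hβp]; exact one_ne_zero)
  refine ⟨μ * β⁻¹, hS ?_, β, hβ, inv_mul_cancel_right₀ hβ0 μ⟩
  change (μ * β⁻¹) ^ p = 1
  rw [mul_pow, inv_pow, hβp, inv_one, mul_one]
  exact hμ

theorem stmt12_general {F : Type*} [Field F] [IsAlgClosed F]
    (p k : ℕ) (hp : p.Prime)
    (G : Subgroup (GL (Fin (p ^ k)) F))
    (hexp : ∀ g ∈ G, g ^ p = 1)
    (hform : ∀ g ∈ G, ∃ (d : Fin (p ^ k) → F) (σ : Equiv.Perm (Fin (p ^ k))),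
      (∀ i, d i ^ p = 1) ∧ σ ^ p = 1 ∧
      (g : Matrix (Fin (p ^ k)) (Fin (p ^ k)) F) = Matrix.diagonal d * σ.permMatrix F) :
    ∀ A B : GL (Fin (p ^ k)) F, A ∈ G → B ∈ G →
      spectrum F ((A * B : GL (Fin (p ^ k)) F) : Matrix (Fin (p ^ k)) (Fin (p ^ k)) F) ⊆
        spectrum F (A : Matrix (Fin (p ^ k)) (Fin (p ^ k)) F) *
          spectrum F (B : Matrix (Fin (p ^ k)) (Fin (p ^ k)) F) := by
  intro A B hA hB
  have : NeZero (p ^ k) := ⟨pow_ne_zero k hp.ne_zero⟩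
  have hpow (g) (hg : g ∈ G) : (g : Matrix (Fin (p ^ k)) (Fin (p ^ k)) F) ^ p = 1 := by
    rw [← Units.val_pow_eq_pow_val, hexp g hg, Units.val_one]
  have hroots (g) (hg : g ∈ G) : spectrum F (g : Matrix (Fin (p ^ k)) (Fin (p ^ k)) F) ⊆
      {x | x ^ p = 1} := fun _ => spectrum.pow_eq_one_of_pow_eq_one (hpow g hg)
  have hfull (g) (hg : g ∈ G) (d σ) (hd : ∀ i, d i ^ p = 1) (hσ : σ ^ p = 1)
      (hgdσ : (g : Matrix (Fin (p ^ k)) (Fin (p ^ k)) F) = diagonal d * σ.permMatrix F)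
      (hσ1 : σ ≠ 1) : {x | x ^ p = 1} ⊆ spectrum F (g : Matrix (Fin (p ^ k)) (Fin (p ^ k)) F) :=
    fun _ hω => hgdσ ▸ mem_spectrum_diagonal_mul_permMatrix hp
      (fun i => ne_zero_pow hp.ne_zero (by rw [hd i]; exact one_ne_zero)) hσ1 hσ
      (hgdσ ▸ hpow g hg) hω
  have hnonempty (g : GL (Fin (p ^ k)) F) := spectrum.nonempty_of_isAlgClosed_of_finiteDimensional
    F (g : Matrix (Fin (p ^ k)) (Fin (p ^ k)) F)
  have hAB := hroots _ (mul_mem hA hB)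
  obtain ⟨dA, σA, hdA, hσA, hAeq⟩ := hform A hA
  obtain ⟨dB, σB, hdB, hσB, hBeq⟩ := hform B hB
  by_cases hσA1 : σA = 1
  · by_cases hσB1 : σB = 1
    · subst hσA1 hσB1
      simp only [permMatrix_one, mul_one] at hAeq hBeq
      rw [Units.val_mul, hAeq, hBeq, diagonal_mul_diagonal]
      simp only [spectrum_diagonal]
      rintro _ ⟨i, rfl⟩
      exact Set.mul_mem_mul ⟨i, rfl⟩ ⟨i, rfl⟩
    · rw [mul_comm (spectrum F _)]
      exact hAB.trans <| Set.setOf_pow_eq_one_subset_mul hp.ne_zero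
        (hfull B hB dB σB hdB hσB hBeq hσB1) (hroots A hA) (hnonempty A)
  · exact hAB.trans <| Set.setOf_pow_eq_one_subset_mul hp.ne_zero
      (hfull A hA dA σA hdA hσA hAeq hσA1) (hroots B hB) (hnonempty B)

/-- Let `p` be a prime and `G ⊆ GL_{p^k}(F)` a finite irreducible monomial
matrix group of exponent `p`, in which every element has the form `D·P` with `D`
diagonal with `p`-th roots of unity on the diagonal and `P` a permutation matrix of
order dividing `p`.  Then `G` has submultiplicative spectrum. -/
theorem stmt12 {F : Type*} [Field F] [IsAlgClosed F] [CharZero F]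
    (p k : ℕ) (hp : p.Prime)
    (G : Subgroup (GL (Fin (p ^ k)) F)) (hfin : Finite G)
    (hexp : ∀ g ∈ G, g ^ p = 1)
    (hform : ∀ g ∈ G, ∃ (d : Fin (p ^ k) → F) (σ : Equiv.Perm (Fin (p ^ k))),
      (∀ i, d i ^ p = 1) ∧ σ ^ p = 1 ∧
      (g : Matrix (Fin (p ^ k)) (Fin (p ^ k)) F) = Matrix.diagonal d * σ.permMatrix F)
    (hirr : ∀ W : Submodule F (Fin (p ^ k) → F),
      (∀ g ∈ G, W.map (Matrix.mulVecLin (g : Matrix (Fin (p ^ k)) (Fin (p ^ k)) F)) ≤ W) →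
      W = ⊥ ∨ W = ⊤) :
    ∀ A B : GL (Fin (p ^ k)) F, A ∈ G → B ∈ G →
      spectrum F ((A * B : GL (Fin (p ^ k)) F) : Matrix (Fin (p ^ k)) (Fin (p ^ k)) F) ⊆
        spectrum F (A : Matrix (Fin (p ^ k)) (Fin (p ^ k)) F) *
          spectrum F (B : Matrix (Fin (p ^ k)) (Fin (p ^ k)) F) :=
  stmt12_general p k hp G hexp hform
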